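/- Let K be a set with at least, say, infinitely many elements, and let D(K) be the test space of all finite ensembles over K, i.e., finite sets {(t₁,α₁),...,(tₙ,αₙ)} with distinct αᵢ ∈ K, tᵢ ∈ (0,1], and Σtᵢ = 1. Then the only probability weight on D(K) is ρ(t,α) = t. -/

import Mathlib

/-- Let `K` be an infinite set and `D(K)` the test space of all
finite ensembles over `K` (finite sets of pairs `(t, α)` with distinct `α`'s,
`t ∈ (0,1]`, and the `t`'s summing to `1`). Then the only probability weight on
`D(K)` is `ρ(t, α) = t`. -/
theorem stmt12 {K : Type*} [Infinite K] (f : ℝ × K → ℝ)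
    (hf01 : ∀ (t : ℝ) (α : K), 0 < t → t ≤ 1 → 0 ≤ f (t, α) ∧ f (t, α) ≤ 1)
    (hw : ∀ E : Finset (ℝ × K),
      (∀ p ∈ E, 0 < p.1 ∧ p.1 ≤ 1) →
      (∀ p ∈ E, ∀ q ∈ E, p.2 = q.2 → p = q) →
      (∑ p ∈ E, p.1) = 1 →
      ∑ p ∈ E, f p = 1) :
    ∀ (t : ℝ) (α : K), 0 < t → t ≤ 1 → f (t, α) = t := by
  classical
  -- two-outcome ensembles
  have pair : ∀ (t : ℝ) (α γ : K), 0 < t → t < 1 → α ≠ γ →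
      f (t, α) + f (1 - t, γ) = 1 := by
    intro t α γ ht ht1 hαγ
    have hne : ((t, α) : ℝ × K) ≠ (1 - t, γ) := fun h => hαγ (Prod.ext_iff.mp h).2
    have h := hw {(t, α), (1 - t, γ)} ?_ ?_ ?_
    · rwa [Finset.sum_pair hne] at h
    · intro p hp
      simp only [Finset.mem_insert, Finset.mem_singleton] at hp
      rcases hp with rfl | rfl
      · exact ⟨ht, ht1.le⟩
      · constructor <;> simp <;> linarith
    · intro p hp q hq hpq
      simp only [Finset.mem_insert, Finset.mem_singleton] at hp hq
      rcases hp with rfl | rfl <;> rcases hq with rfl | rfl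
      · rfl
      · exact absurd hpq hαγ
      · exact absurd hpq.symm hαγ
      · rfl
    · rw [Finset.sum_pair hne]; ring
  -- independence of the label
  have hind : ∀ (t : ℝ) (α β : K), 0 < t → t < 1 → f (t, α) = f (t, β) := by
    intro t α β ht ht1
    obtain ⟨γ, hγ⟩ := (Set.Finite.infinite_compl (Set.toFinite ({α, β} : Set K))).nonempty
    simp only [Set.mem_compl_iff, Set.mem_insert_iff, Set.mem_singleton_iff, not_or] at hγ
    have h1 := pair t α γ ht ht1 (fun h => hγ.1 h.symm)
    have h2 := pair t β γ ht ht1 (fun h => hγ.2 h.symm)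
    linarith
  -- uniform ensembles
  have huni : ∀ n : ℕ, 2 ≤ n → ∀ α : K, f (1 / n, α) = 1 / n := by
    intro n hn α
    obtain ⟨S, hS⟩ := Infinite.exists_subset_card_eq K n
    have hnR : (0:ℝ) < n := by positivity
    have hlt : (1:ℝ) / n < 1 := by
      rw [div_lt_one hnR]; exact_mod_cast lt_of_lt_of_le one_lt_two hn
    have hpos : (0:ℝ) < 1 / n := by positivity
    have hinj : Function.Injective (fun β : K => ((1:ℝ) / n, β)) := by
      intro a b h; exact (Prod.ext_iff.mp h).2
    have h := hw (S.image fun β => ((1:ℝ) / n, β)) ?_ ?_ ?_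
    · rw [Finset.sum_image (fun a _ b _ h => hinj h)] at h
      have : ∀ β ∈ S, f (1 / n, β) = f (1 / n, α) := fun β _ => hind _ β α hpos hlt
      rw [Finset.sum_congr rfl this, Finset.sum_const, hS, nsmul_eq_mul] at h
      field_simp at h ⊢
      linarith
    · intro p hp
      simp only [Finset.mem_image] at hp
      obtain ⟨β, _, rfl⟩ := hp
      exact ⟨hpos, hlt.le⟩
    · intro p hp q hq hpq
      simp only [Finset.mem_image] at hp hq
      obtain ⟨a, _, rfl⟩ := hp; obtain ⟨b, _, rfl⟩ := hq
      exact congrArg (fun x => ((1:ℝ)/n, x)) (hpq : a = b)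
    · rw [Finset.sum_image (fun a _ b _ h => hinj h), Finset.sum_const, hS, nsmul_eq_mul]
      field_simp
  -- rational values
  have hrat : ∀ (m n : ℕ), 0 < m → m < n → ∀ α : K, f ((m:ℝ) / n, α) = (m:ℝ) / n := by
    intro m n hm hmn α
    have hn2 : 2 ≤ n := by omega
    have hnR : (0:ℝ) < n := by positivity
    have hmR : (0:ℝ) < m := by exact_mod_cast hm
    have hmnR : (m:ℝ) < n := by exact_mod_cast hmn
    have hpos : (0:ℝ) < (m:ℝ) / n := by positivity
    have hlt : (m:ℝ) / n < 1 := by rw [div_lt_one hnR]; exact hmnR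
    obtain ⟨S, hSsub, hScard⟩ :=
      (Set.Finite.infinite_compl (Set.finite_singleton α)).exists_subset_card_eq (n - m)
    have hαS : α ∉ S := fun h => (hSsub h) rfl
    have hinj : Function.Injective (fun β : K => ((1:ℝ) / n, β)) := by
      intro a b h; exact (Prod.ext_iff.mp h).2
    have hnotmem : ((m:ℝ) / n, α) ∉ S.image fun β => ((1:ℝ) / n, β) := by
      simp only [Finset.mem_image, not_exists, not_and]
      intro β hβ h
      have h2 : β = α := (Prod.ext_iff.mp h).2
      exact hαS (h2 ▸ hβ)
    have h := hw (insert ((m:ℝ) / n, α) (S.image fun β => ((1:ℝ) / n, β))) ?_ ?_ ?_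
    · rw [Finset.sum_insert hnotmem,
        Finset.sum_image (fun a _ b _ h => hinj h)] at h
      have : ∀ β ∈ S, f (1 / n, β) = 1 / n := fun β _ => huni n hn2 β
      rw [Finset.sum_congr rfl this, Finset.sum_const, hScard, nsmul_eq_mul] at h
      have hcast : ((n - m : ℕ) : ℝ) = (n:ℝ) - m := by
        push_cast [Nat.cast_sub hmn.le]; ring
      rw [hcast] at h
      field_simp at h ⊢
      linarith
    · intro p hp
      simp only [Finset.mem_insert, Finset.mem_image] at hp
      rcases hp with rfl | ⟨β, _, rfl⟩
      · exact ⟨hpos, hlt.le⟩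
      · constructor
        · positivity
        · rw [div_le_one hnR]; exact_mod_cast le_of_lt (by omega : 1 < n)
    · intro p hp q hq hpq
      simp only [Finset.mem_insert, Finset.mem_image] at hp hq
      rcases hp with rfl | ⟨a, ha, rfl⟩ <;> rcases hq with rfl | ⟨b, hb, rfl⟩
      · rfl
      · have h2 : α = b := hpq
        exact absurd (h2 ▸ hb) hαS
      · have h2 : a = α := hpq
        exact absurd (h2 ▸ ha) hαS
      · exact congrArg (fun x => ((1:ℝ)/n, x)) (hpq : a = b)
    · rw [Finset.sum_insert hnotmem,
        Finset.sum_image (fun a _ b _ h => hinj h), Finset.sum_const, hScard, nsmul_eq_mul]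
      have hcast : ((n - m : ℕ) : ℝ) = (n:ℝ) - m := by
        push_cast [Nat.cast_sub hmn.le]; ring
      rw [hcast]
      field_simp
      ring
  -- rational values, ℚ version
  have hratQ : ∀ (q : ℚ) (α : K), 0 < q → q < 1 → f ((q:ℝ), α) = (q:ℝ) := by
    intro q α hq hq1
    have hnum : 0 < q.num := Rat.num_pos.mpr hq
    have hmn : q.num.toNat < q.den := by
      have hden : (0:ℚ) < (q.den : ℚ) := by exact_mod_cast q.pos
      have h1 : (q.num : ℚ) < (q.den : ℚ) := by
        rw [← Rat.num_div_den q, div_lt_one hden] at hq1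
        exact_mod_cast hq1
      have h2 : q.num < (q.den : ℤ) := by exact_mod_cast h1
      omega
    have hm : 0 < q.num.toNat := by omega
    have hcast : ((q.num.toNat : ℝ)) / (q.den : ℝ) = (q : ℝ) := by
      rw [Rat.cast_def]
      congr 1
      exact_mod_cast Int.toNat_of_nonneg hnum.le
    rw [← hcast]
    exact hrat _ _ hm hmn α
  -- monotonicity
  have hmono : ∀ (s t : ℝ) (α : K), 0 < s → s < t → t < 1 → f (s, α) ≤ f (t, α) := by
    intro s t α hs hst ht1
    obtain ⟨P, hPsub, hPcard⟩ :=
      (Set.Finite.infinite_compl (Set.finite_singleton α)).exists_subset_card_eq 2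
    obtain ⟨β, γ, hβγ, rfl⟩ := Finset.card_eq_two.mp hPcard
    have hβα : β ≠ α := fun h => (hPsub (by simp)) h
    have hγα : γ ≠ α := fun h => (hPsub (by simp)) h
    have h1 : f (t, α) + f (1 - t, γ) = 1 := pair t α γ (hs.trans hst) ht1 (Ne.symm hγα)
    -- three-outcome ensemble {(s,α),(t-s,β),(1-t,γ)}
    have hne1 : ((s, α) : ℝ × K) ≠ (t - s, β) := fun h => hβα ((Prod.ext_iff.mp h).2).symm
    have hne2 : ((s, α) : ℝ × K) ≠ (1 - t, γ) := fun h => hγα ((Prod.ext_iff.mp h).2).symm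
    have hne3 : ((t - s, β) : ℝ × K) ≠ (1 - t, γ) := fun h => hβγ ((Prod.ext_iff.mp h).2)
    have hnm1 : ((s, α) : ℝ × K) ∉ ({(t - s, β), (1 - t, γ)} : Finset (ℝ × K)) := by
      simp only [Finset.mem_insert, Finset.mem_singleton]
      push_neg
      exact ⟨hne1, hne2⟩
    have h2 := hw {(s, α), (t - s, β), (1 - t, γ)} ?_ ?_ ?_
    · rw [Finset.sum_insert hnm1, Finset.sum_pair hne3] at h2
      have hfb := (hf01 (t - s) β (by linarith) (by linarith)).1
      linarith
    · intro p hp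
      simp only [Finset.mem_insert, Finset.mem_singleton] at hp
      rcases hp with rfl | rfl | rfl
      · exact ⟨hs, by show s ≤ 1; linarith⟩
      · exact ⟨show (0:ℝ) < t - s by linarith, show t - s ≤ 1 by linarith⟩
      · exact ⟨show (0:ℝ) < 1 - t by linarith, show 1 - t ≤ 1 by linarith⟩
    · intro p hp q hq hpq
      simp only [Finset.mem_insert, Finset.mem_singleton] at hp hq
      rcases hp with rfl | rfl | rfl <;> rcases hq with rfl | rfl | rfl
      · rfl
      · exact absurd hpq (Ne.symm hβα)
      · exact absurd hpq (Ne.symm hγα)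
      · exact absurd hpq hβα
      · rfl
      · exact absurd hpq hβγ
      · exact absurd hpq hγα
      · exact absurd hpq (Ne.symm hβγ)
      · rfl
    · rw [Finset.sum_insert hnm1, Finset.sum_pair hne3]; ring
  -- conclusion
  intro t α ht ht1
  rcases eq_or_lt_of_le ht1 with rfl | ht1'
  · -- t = 1
    have h := hw {(1, α)} (by simp) (by simp) (by simp)
    simpa using h
  · -- t < 1 : squeeze
    have hle : f (t, α) ≤ t := by
      by_contra h
      push_neg at h
      have hf1 := (hf01 t α ht ht1).2
      obtain ⟨q, hq1, hq2⟩ := exists_rat_btwn (lt_min h ht1')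
      have hq2' := lt_min_iff.mp hq2
      have hqpos : (0:ℚ) < q := by exact_mod_cast ht.trans hq1
      have hqlt1 : (q:ℚ) < 1 := by exact_mod_cast hq2'.2
      have := hmono t (q:ℝ) α ht hq1 hq2'.2
      rw [hratQ q α hqpos hqlt1] at this
      linarith [hq2'.1]
    have hge : t ≤ f (t, α) := by
      by_contra h
      push_neg at h
      have hf0 := (hf01 t α ht ht1).1
      obtain ⟨q, hq1, hq2⟩ := exists_rat_btwn h
      have hqpos : (0:ℚ) < q := by exact_mod_cast hf0.trans_lt hq1
      have hqlt1 : (q:ℚ) < 1 := by exact_mod_cast hq2.trans ht1'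
      have := hmono (q:ℝ) t α (by exact_mod_cast hqpos) hq2 ht1'
      rw [hratQ q α hqpos hqlt1] at this
      linarith
    linarith
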